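/- Let g(x) = min{2x, 2-2x} on [0,1] and g_m its m-fold composition. Then the partial sum f_n(x) = x - ∑_{m=1}^n g_m(x)/4^m satisfies |f_n(x) - x²| ≤ 4^{-(n+1)} for all x ∈ [0,1]. -/

import Mathlib

/-!
The defect `y - y ^ 2` of the parabola satisfies `y - y ^ 2 = (g y + (g y - (g y) ^ 2)) / 4`, so
each term `g_m(x) / 4 ^ m` of the sum peels off one level of the defect, and after `n` terms the
error is exactly `(g_n x - (g_n x) ^ 2) / 4 ^ n`. Since `g` maps `[0,1]` into itself and
`0 ≤ y - y ^ 2 ≤ 1/4` there, the error is at most `4⁻¹ / 4 ^ n`.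
-/

/-- The tent (hat) function `g(x) = min (2x) (2 - 2x)`. -/
noncomputable def tent : ℝ → ℝ := fun x => min (2 * x) (2 - 2 * x)

lemma tent_mapsTo_Icc : Set.MapsTo tent (Set.Icc 0 1) (Set.Icc 0 1) := by
  rintro x ⟨h0, h1⟩
  unfold tent
  rcases le_total x (1 / 2) with h | h
  · rw [min_eq_left (by linarith)]; constructor <;> linarith
  · rw [min_eq_right (by linarith)]; constructor <;> linarith

lemma sub_sq_eq_tent (y : ℝ) : y - y ^ 2 = (tent y + (tent y - tent y ^ 2)) / 4 := by
  unfold tent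
  rcases le_total y (1 / 2) with h | h
  · rw [min_eq_left (by linarith)]; ring
  · rw [min_eq_right (by linarith)]; ring

lemma sub_sum_tent_iterate_sub_sq (n : ℕ) (x : ℝ) :
    (x - ∑ m ∈ Finset.Icc 1 n, tent^[m] x / 4 ^ m) - x ^ 2
      = (tent^[n] x - (tent^[n] x) ^ 2) / 4 ^ n := by
  induction n with
  | zero => simp
  | succ n ih =>
    have hstep := sub_sq_eq_tent (tent^[n] x)
    rw [← Function.iterate_succ_apply' tent n x] at hstep
    rw [Finset.sum_Icc_succ_top (by omega), pow_succ]
    calc (x - (∑ m ∈ Finset.Icc 1 n, tent^[m] x / 4 ^ m + tent^[n + 1] x / (4 ^ n * 4))) - x ^ 2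
        = (tent^[n] x - (tent^[n] x) ^ 2) / 4 ^ n - tent^[n + 1] x / (4 ^ n * 4) := by
          rw [← ih]; ring
      _ = (tent^[n + 1] x - (tent^[n + 1] x) ^ 2) / (4 ^ n * 4) := by
          rw [hstep]; field_simp; ring

lemma abs_sub_sq_le {y : ℝ} (hy : y ∈ Set.Icc (0 : ℝ) 1) : |y - y ^ 2| ≤ 1 / 4 := by
  obtain ⟨h0, h1⟩ := hy
  rw [abs_le]
  constructor <;> nlinarith [sq_nonneg (y - 1 / 2)]

/-- The partial sum `f_n(x) = x - ∑_{m=1}^n g_m(x)/4^m` (with `g_m` the `m`-fold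
composition of the tent map) approximates `x²` on `[0,1]` with error at most `4^{-(n+1)}`. -/
theorem stmt_1 (n : ℕ) (x : ℝ) (hx : x ∈ Set.Icc (0 : ℝ) 1) :
    |(x - ∑ m ∈ Finset.Icc 1 n, tent^[m] x / 4 ^ m) - x ^ 2| ≤ ((4 : ℝ) ^ (n + 1))⁻¹ := by
  have hbound := abs_sub_sq_le (tent_mapsTo_Icc.iterate n hx)
  rw [sub_sum_tent_iterate_sub_sq, abs_div, abs_of_pos (by positivity : (0 : ℝ) < 4 ^ n)]
  calc |tent^[n] x - (tent^[n] x) ^ 2| / 4 ^ n ≤ (1 / 4) / 4 ^ n := by gcongr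
    _ = ((4 : ℝ) ^ (n + 1))⁻¹ := by rw [pow_succ]; field_simp
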